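/- Let U : ℂ → ℂ be smooth. Let (ψ₀₁, ψ₀₂) and (ψ₁, ψ₂) both satisfy the Dirac equation with potential U, and let (φ₀₁, φ₀₂) satisfy the conjugate Dirac equation with potential U. Let S₀ : ℂ → M₂(ℂ) be smooth, quaternion-type and invertible at every point with S₀_z = M(Φ₀,Ψ₀) and S₀_z̄ = N(Φ₀,Ψ₀), and let S₁ : ℂ → M₂(ℂ) be smooth with S₁_z = M(Φ₀,Ψ) and S₁_z̄ = N(Φ₀,Ψ). Define K = Ψ₀ S₀⁻¹ Γ Φ₀ᵀ Γ⁻¹, W = i·K₂₂, Ũ = U + W, and Ψ̃ = Ψ − Ψ₀ S₀⁻¹ S₁. Then each column (α, β)ᵀ of Ψ̃ satisfies the Dirac equation with potential Ũ: β_z = −Ũα and α_z̄ = conj(Ũ)β at every point. -/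

import Mathlib

open Complex ComplexConjugate Matrix

noncomputable section

/-- Wirtinger derivative ∂_z for a function on ℂ. -/
def dz (g : ℂ → ℂ) (z : ℂ) : ℂ :=
  (2 : ℂ)⁻¹ * (fderiv ℝ g z 1 - Complex.I * fderiv ℝ g z Complex.I)

/-- Wirtinger derivative ∂_z̄ for a function on ℂ. -/
def dzb (g : ℂ → ℂ) (z : ℂ) : ℂ :=
  (2 : ℂ)⁻¹ * (fderiv ℝ g z 1 + Complex.I * fderiv ℝ g z Complex.I)

/-- Entrywise ∂_z of a matrix-valued function on ℂ. -/
def mdz (F : ℂ → Matrix (Fin 2) (Fin 2) ℂ) (z : ℂ) : Matrix (Fin 2) (Fin 2) ℂ :=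
  Matrix.of fun i j => dz (fun w => F w i j) z

/-- Entrywise ∂_z̄ of a matrix-valued function on ℂ. -/
def mdzb (F : ℂ → Matrix (Fin 2) (Fin 2) ℂ) (z : ℂ) : Matrix (Fin 2) (Fin 2) ℂ :=
  Matrix.of fun i j => dzb (fun w => F w i j) z

/-- (ψ₁,ψ₂) satisfies the Dirac equation with potential U. -/
def Dirac (U ψ₁ ψ₂ : ℂ → ℂ) : Prop :=
  ∀ z, dz ψ₂ z = -(U z) * ψ₁ z ∧ dzb ψ₁ z = conj (U z) * ψ₂ z

/-- (φ₁,φ₂) satisfies the conjugate Dirac equation with potential U. -/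
def DiracV (U φ₁ φ₂ : ℂ → ℂ) : Prop :=
  ∀ z, dz φ₂ z = -(conj (U z)) * φ₁ z ∧ dzb φ₁ z = U z * φ₂ z

/-- The quaternion-type matrix built from a spinor. -/
def spinMat (ψ₁ ψ₂ : ℂ → ℂ) (z : ℂ) : Matrix (Fin 2) (Fin 2) ℂ :=
  !![ψ₁ z, -conj (ψ₂ z); ψ₂ z, conj (ψ₁ z)]

def Gam : Matrix (Fin 2) (Fin 2) ℂ := !![0, 1; -1, 0]

/-- The dz-component M(Φ,Ψ) of the closed 1-form. -/
def Mform (ψ₁ ψ₂ φ₁ φ₂ : ℂ → ℂ) (z : ℂ) : Matrix (Fin 2) (Fin 2) ℂ :=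
  Complex.I • !![ψ₁ z * conj (φ₂ z), -conj (ψ₂ z) * conj (φ₂ z);
                 ψ₁ z * φ₁ z, -conj (ψ₂ z) * φ₁ z]

/-- The dz̄-component N(Φ,Ψ) of the closed 1-form. -/
def Nform (ψ₁ ψ₂ φ₁ φ₂ : ℂ → ℂ) (z : ℂ) : Matrix (Fin 2) (Fin 2) ℂ :=
  Complex.I • !![ψ₂ z * conj (φ₁ z), conj (ψ₁ z) * conj (φ₁ z);
                 -(ψ₂ z * φ₂ z), -conj (ψ₁ z) * φ₂ z]


lemma dz_add {f g : ℂ → ℂ} {z : ℂ} (hf : DifferentiableAt ℝ f z)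
    (hg : DifferentiableAt ℝ g z) :
    dz (fun w => f w + g w) z = dz f z + dz g z := by
  simp [dz, fderiv_fun_add hf hg]; ring

lemma dzb_add {f g : ℂ → ℂ} {z : ℂ} (hf : DifferentiableAt ℝ f z)
    (hg : DifferentiableAt ℝ g z) :
    dzb (fun w => f w + g w) z = dzb f z + dzb g z := by
  simp [dzb, fderiv_fun_add hf hg]; ring

lemma dz_sub {f g : ℂ → ℂ} {z : ℂ} (hf : DifferentiableAt ℝ f z)
    (hg : DifferentiableAt ℝ g z) :
    dz (fun w => f w - g w) z = dz f z - dz g z := by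
  simp [dz, fderiv_fun_sub hf hg]; ring

lemma dzb_sub {f g : ℂ → ℂ} {z : ℂ} (hf : DifferentiableAt ℝ f z)
    (hg : DifferentiableAt ℝ g z) :
    dzb (fun w => f w - g w) z = dzb f z - dzb g z := by
  simp [dzb, fderiv_fun_sub hf hg]; ring

lemma dz_mul {f g : ℂ → ℂ} {z : ℂ} (hf : DifferentiableAt ℝ f z)
    (hg : DifferentiableAt ℝ g z) :
    dz (fun w => f w * g w) z = dz f z * g z + f z * dz g z := by
  simp [dz, fderiv_fun_mul hf hg, smul_eq_mul]; ring

lemma dzb_mul {f g : ℂ → ℂ} {z : ℂ} (hf : DifferentiableAt ℝ f z)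
    (hg : DifferentiableAt ℝ g z) :
    dzb (fun w => f w * g w) z = dzb f z * g z + f z * dzb g z := by
  simp [dzb, fderiv_fun_mul hf hg, smul_eq_mul]; ring

lemma dz_neg (f : ℂ → ℂ) (z : ℂ) : dz (fun w => -f w) z = -dz f z := by
  simp [dz, fderiv_neg]; ring

lemma dzb_neg (f : ℂ → ℂ) (z : ℂ) : dzb (fun w => -f w) z = -dzb f z := by
  simp [dzb, fderiv_neg]; ring

lemma dz_conj {f : ℂ → ℂ} {z : ℂ} (hf : DifferentiableAt ℝ f z) :
    dz (fun w => conj (f w)) z = conj (dzb f z) := by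
  have h : fderiv ℝ (fun w => conj (f w)) z =
      (Complex.conjCLE : ℂ ≃L[ℝ] ℂ).toContinuousLinearMap.comp (fderiv ℝ f z) :=
    (Complex.conjCLE.toContinuousLinearMap.hasFDerivAt.comp z hf.hasFDerivAt).fderiv
  simp [dz, dzb, h, map_add, _root_.map_mul, map_sub, map_ofNat]
  try ring

lemma dzb_conj {f : ℂ → ℂ} {z : ℂ} (hf : DifferentiableAt ℝ f z) :
    dzb (fun w => conj (f w)) z = conj (dz f z) := by
  have h : fderiv ℝ (fun w => conj (f w)) z =
      (Complex.conjCLE : ℂ ≃L[ℝ] ℂ).toContinuousLinearMap.comp (fderiv ℝ f z) :=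
    (Complex.conjCLE.toContinuousLinearMap.hasFDerivAt.comp z hf.hasFDerivAt).fderiv
  simp [dz, dzb, h, map_add, _root_.map_mul, map_sub, map_ofNat]
  try ring

lemma diffat_conj {f : ℂ → ℂ} {z : ℂ} (hf : DifferentiableAt ℝ f z) :
    DifferentiableAt ℝ (fun w => conj (f w)) z :=
  (Complex.conjCLE.differentiable.differentiableAt).comp z hf

lemma mul_entry_diff {F G : ℂ → Matrix (Fin 2) (Fin 2) ℂ} {z : ℂ}
    (hF : ∀ i j, DifferentiableAt ℝ (fun w => F w i j) z)
    (hG : ∀ i j, DifferentiableAt ℝ (fun w => G w i j) z) :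
    ∀ i j, DifferentiableAt ℝ (fun w => (F w * G w) i j) z := by
  intro i j
  have h : (fun w => (F w * G w) i j)
      = fun w => F w i 0 * G w 0 j + F w i 1 * G w 1 j :=
    funext fun w => by simp [Matrix.mul_apply, Fin.sum_univ_two]
  rw [h]
  exact ((hF i 0).mul (hG 0 j)).add ((hF i 1).mul (hG 1 j))

lemma mdz_sub {F G : ℂ → Matrix (Fin 2) (Fin 2) ℂ} {z : ℂ}
    (hF : ∀ i j, DifferentiableAt ℝ (fun w => F w i j) z)
    (hG : ∀ i j, DifferentiableAt ℝ (fun w => G w i j) z) :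
    mdz (fun w => F w - G w) z = mdz F z - mdz G z := by
  ext i j
  have h : (fun w => (F w - G w) i j) = fun w => F w i j - G w i j :=
    funext fun w => by simp [Matrix.sub_apply]
  simp only [mdz, Matrix.of_apply, Matrix.sub_apply, h]
  exact dz_sub (hF i j) (hG i j)

lemma mdzb_sub {F G : ℂ → Matrix (Fin 2) (Fin 2) ℂ} {z : ℂ}
    (hF : ∀ i j, DifferentiableAt ℝ (fun w => F w i j) z)
    (hG : ∀ i j, DifferentiableAt ℝ (fun w => G w i j) z) :
    mdzb (fun w => F w - G w) z = mdzb F z - mdzb G z := by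
  ext i j
  have h : (fun w => (F w - G w) i j) = fun w => F w i j - G w i j :=
    funext fun w => by simp [Matrix.sub_apply]
  simp only [mdzb, Matrix.of_apply, Matrix.sub_apply, h]
  exact dzb_sub (hF i j) (hG i j)

lemma mdz_mul {F G : ℂ → Matrix (Fin 2) (Fin 2) ℂ} {z : ℂ}
    (hF : ∀ i j, DifferentiableAt ℝ (fun w => F w i j) z)
    (hG : ∀ i j, DifferentiableAt ℝ (fun w => G w i j) z) :
    mdz (fun w => F w * G w) z = mdz F z * G z + F z * mdz G z := by
  ext i j
  have h : (fun w => (F w * G w) i j)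
      = fun w => F w i 0 * G w 0 j + F w i 1 * G w 1 j :=
    funext fun w => by simp [Matrix.mul_apply, Fin.sum_univ_two]
  simp only [mdz, Matrix.of_apply, h]
  rw [dz_add (f := fun w => F w i 0 * G w 0 j) (g := fun w => F w i 1 * G w 1 j) ((hF i 0).mul (hG 0 j)) ((hF i 1).mul (hG 1 j)),
    dz_mul (hF i 0) (hG 0 j), dz_mul (hF i 1) (hG 1 j)]
  simp [Matrix.mul_apply, Fin.sum_univ_two, Matrix.add_apply, mdz]
  ring

lemma mdzb_mul {F G : ℂ → Matrix (Fin 2) (Fin 2) ℂ} {z : ℂ}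
    (hF : ∀ i j, DifferentiableAt ℝ (fun w => F w i j) z)
    (hG : ∀ i j, DifferentiableAt ℝ (fun w => G w i j) z) :
    mdzb (fun w => F w * G w) z = mdzb F z * G z + F z * mdzb G z := by
  ext i j
  have h : (fun w => (F w * G w) i j)
      = fun w => F w i 0 * G w 0 j + F w i 1 * G w 1 j :=
    funext fun w => by simp [Matrix.mul_apply, Fin.sum_univ_two]
  simp only [mdzb, Matrix.of_apply, h]
  rw [dzb_add (f := fun w => F w i 0 * G w 0 j) (g := fun w => F w i 1 * G w 1 j) ((hF i 0).mul (hG 0 j)) ((hF i 1).mul (hG 1 j)),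
    dzb_mul (hF i 0) (hG 0 j), dzb_mul (hF i 1) (hG 1 j)]
  simp [Matrix.mul_apply, Fin.sum_univ_two, Matrix.add_apply, mdzb]
  ring

lemma mdz_one (z : ℂ) : mdz (fun _ => (1 : Matrix (Fin 2) (Fin 2) ℂ)) z = 0 := by
  ext i j; simp [mdz, dz]

lemma mdzb_one (z : ℂ) : mdzb (fun _ => (1 : Matrix (Fin 2) (Fin 2) ℂ)) z = 0 := by
  ext i j; simp [mdzb, dzb]

lemma gam_inv : Gam⁻¹ = !![(0:ℂ), -1; 1, 0] := by
  rw [Matrix.inv_def, Matrix.adjugate_fin_two]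
  norm_num [Gam, Matrix.det_fin_two]

lemma spin_diff {a b : ℂ → ℂ} (ha : ContDiff ℝ (⊤ : ℕ∞) a) (hb : ContDiff ℝ (⊤ : ℕ∞) b) :
    ∀ (z : ℂ) (i j : Fin 2), DifferentiableAt ℝ (fun w => spinMat a b w i j) z := by
  intro z i j
  have ha' := (ha.differentiable (by simp)).differentiableAt (x := z)
  have hb' := (hb.differentiable (by simp)).differentiableAt (x := z)
  fin_cases i <;> fin_cases j <;> simp only [spinMat, Matrix.cons_val', Matrix.cons_val_zero,
    Matrix.cons_val_one, Matrix.head_cons, Matrix.empty_val', Matrix.cons_val_fin_one,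
    Matrix.head_fin_const, Fin.isValue]
  · exact ha'
  · exact (diffat_conj hb').neg
  · exact hb'
  · exact diffat_conj ha'


lemma fin2_cases (j : Fin 2) : j = 0 ∨ j = 1 := by
  fin_cases j
  · exact Or.inl rfl
  · exact Or.inr rfl

lemma spin_rows {U a b : ℂ → ℂ} (ha : ContDiff ℝ (⊤ : ℕ∞) a) (hb : ContDiff ℝ (⊤ : ℕ∞) b)
    (h : Dirac U a b) (z : ℂ) :
    mdz (spinMat a b) z 1 0 = -(U z) * a z ∧
    mdz (spinMat a b) z 1 1 = U z * conj (b z) ∧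
    mdzb (spinMat a b) z 0 0 = conj (U z) * b z ∧
    mdzb (spinMat a b) z 0 1 = conj (U z) * conj (a z) := by
  have ha' := (ha.differentiable (by simp)).differentiableAt (x := z)
  have hb' := (hb.differentiable (by simp)).differentiableAt (x := z)
  have h10 : (fun w => spinMat a b w 1 0) = b := funext fun w => by simp [spinMat]
  have h11 : (fun w => spinMat a b w 1 1) = fun w => conj (a w) :=
    funext fun w => by simp [spinMat]
  have h00 : (fun w => spinMat a b w 0 0) = a := funext fun w => by simp [spinMat]
  have h01 : (fun w => spinMat a b w 0 1) = fun w => -conj (b w) :=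
    funext fun w => by simp [spinMat]
  refine ⟨?_, ?_, ?_, ?_⟩ <;> simp only [mdz, mdzb, Matrix.of_apply]
  · rw [h10]; exact (h z).1
  · rw [h11, dz_conj ha', (h z).2]
    simp only [_root_.map_mul, Complex.conj_conj]
  · rw [h00]; exact (h z).2
  · rw [h01, dzb_neg, dzb_conj hb', (h z).1]
    simp only [_root_.map_mul, map_neg, Complex.conj_conj]
    ring


set_option maxHeartbeats 4000000 in
/-- **The Moutard transform Ψ̃ = Ψ − Ψ₀S₀⁻¹S₁ satisfies the Dirac equation with
potential Ũ = U + W.** -/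
theorem moutard_transform_dirac
    (U ψ₀₁ ψ₀₂ ψ₁ ψ₂ φ₀₁ φ₀₂ : ℂ → ℂ)
    (hU : ContDiff ℝ (⊤ : ℕ∞) U)
    (hψ₀₁ : ContDiff ℝ (⊤ : ℕ∞) ψ₀₁) (hψ₀₂ : ContDiff ℝ (⊤ : ℕ∞) ψ₀₂)
    (hψ₁ : ContDiff ℝ (⊤ : ℕ∞) ψ₁) (hψ₂ : ContDiff ℝ (⊤ : ℕ∞) ψ₂)
    (hφ₀₁ : ContDiff ℝ (⊤ : ℕ∞) φ₀₁) (hφ₀₂ : ContDiff ℝ (⊤ : ℕ∞) φ₀₂)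
    (hDirac₀ : Dirac U ψ₀₁ ψ₀₂) (hDirac : Dirac U ψ₁ ψ₂)
    (hDiracV₀ : DiracV U φ₀₁ φ₀₂)
    (S₀ S₁ : ℂ → Matrix (Fin 2) (Fin 2) ℂ)
    (hS₀ : ∀ i j, ContDiff ℝ (⊤ : ℕ∞) (fun w => S₀ w i j))
    (hquat : ∀ z, S₀ z 1 0 = -conj (S₀ z 0 1) ∧ S₀ z 1 1 = conj (S₀ z 0 0))
    (hinv : ∀ z, IsUnit (S₀ z))
    (hS₀z : ∀ z, mdz S₀ z = Mform ψ₀₁ ψ₀₂ φ₀₁ φ₀₂ z)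
    (hS₀zb : ∀ z, mdzb S₀ z = Nform ψ₀₁ ψ₀₂ φ₀₁ φ₀₂ z)
    (hS₁ : ∀ i j, ContDiff ℝ (⊤ : ℕ∞) (fun w => S₁ w i j))
    (hS₁z : ∀ z, mdz S₁ z = Mform ψ₁ ψ₂ φ₀₁ φ₀₂ z)
    (hS₁zb : ∀ z, mdzb S₁ z = Nform ψ₁ ψ₂ φ₀₁ φ₀₂ z) :
    ∀ j : Fin 2, Dirac
      (fun z => U z + Complex.I *
        (spinMat ψ₀₁ ψ₀₂ z * (S₀ z)⁻¹ * Gam * (spinMat φ₀₁ φ₀₂ z)ᵀ * Gam⁻¹) 1 1)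
      (fun z => (spinMat ψ₁ ψ₂ z - spinMat ψ₀₁ ψ₀₂ z * (S₀ z)⁻¹ * S₁ z) 0 j)
      (fun z => (spinMat ψ₁ ψ₂ z - spinMat ψ₀₁ ψ₀₂ z * (S₀ z)⁻¹ * S₁ z) 1 j) := by
  -- determinant
  set d : ℂ → ℂ := fun w => S₀ w 0 0 * S₀ w 1 1 - S₀ w 0 1 * S₀ w 1 0 with hd
  have hdet : ∀ w, (S₀ w).det = d w := fun w => Matrix.det_fin_two _
  have hdunit : ∀ w, IsUnit (S₀ w).det :=
    fun w => (Matrix.isUnit_iff_isUnit_det _).1 (hinv w)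
  have hd0 : ∀ w, d w ≠ 0 := fun w => by
    have := (hdunit w).ne_zero; rwa [hdet w] at this
  have cd : ∀ {f : ℂ → ℂ}, ContDiff ℝ (⊤ : ℕ∞) f → ∀ z : ℂ, DifferentiableAt ℝ f z :=
    fun hf z => (hf.differentiable (by simp)).differentiableAt
  have hd_diff : ∀ z, DifferentiableAt ℝ d z := fun z =>
    ((cd (hS₀ 0 0) z).mul (cd (hS₀ 1 1) z)).sub ((cd (hS₀ 0 1) z).mul (cd (hS₀ 1 0) z))
  have hTeq : ∀ w, (S₀ w)⁻¹
      = (d w)⁻¹ • !![S₀ w 1 1, -S₀ w 0 1; -S₀ w 1 0, S₀ w 0 0] := by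
    intro w
    rw [Matrix.inv_def, Matrix.adjugate_fin_two, Ring.inverse_eq_inv', hdet]
  -- differentiability of the entries of S₀⁻¹
  have hTd : ∀ (z : ℂ) (i j : Fin 2), DifferentiableAt ℝ (fun w => (S₀ w)⁻¹ i j) z := by
    intro z i j
    have h : (fun w => (S₀ w)⁻¹ i j)
        = fun w => (d w)⁻¹ * (!![S₀ w 1 1, -S₀ w 0 1; -S₀ w 1 0, S₀ w 0 0] i j) := by
      funext w; rw [hTeq w]; simp [Matrix.smul_apply, smul_eq_mul]
    rw [h]
    have hi := (hd_diff z).inv (hd0 z)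
    fin_cases i <;> fin_cases j <;>
      simp only [Matrix.cons_val', Matrix.cons_val_zero, Matrix.cons_val_one, Matrix.head_cons,
        Matrix.empty_val', Matrix.cons_val_fin_one, Matrix.head_fin_const, Fin.isValue]
    · exact hi.mul (cd (hS₀ 1 1) z)
    · exact hi.mul ((cd (hS₀ 0 1) z).neg)
    · exact hi.mul ((cd (hS₀ 1 0) z).neg)
    · exact hi.mul (cd (hS₀ 0 0) z)
  -- derivative of the inverse
  have hS₀d : ∀ (z : ℂ) (i j : Fin 2), DifferentiableAt ℝ (fun w => S₀ w i j) z :=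
    fun z i j => cd (hS₀ i j) z
  have hS₁d : ∀ (z : ℂ) (i j : Fin 2), DifferentiableAt ℝ (fun w => S₁ w i j) z :=
    fun z i j => cd (hS₁ i j) z
  have hone : (fun w => S₀ w * (S₀ w)⁻¹) = (fun _ => (1 : Matrix (Fin 2) (Fin 2) ℂ)) :=
    funext fun w => Matrix.mul_nonsing_inv _ (hdunit w)
  have hmdzT : ∀ z, mdz (fun w => (S₀ w)⁻¹) z
      = -((S₀ z)⁻¹ * (mdz S₀ z * (S₀ z)⁻¹)) := by
    intro z
    have h2 := mdz_mul (F := S₀) (G := fun w => (S₀ w)⁻¹) (hS₀d z) (hTd z)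
    rw [hone, mdz_one] at h2
    have h3 : S₀ z * mdz (fun w => (S₀ w)⁻¹) z = -(mdz S₀ z * (S₀ z)⁻¹) :=
      eq_neg_of_add_eq_zero_right h2.symm
    calc mdz (fun w => (S₀ w)⁻¹) z
        = ((S₀ z)⁻¹ * S₀ z) * mdz (fun w => (S₀ w)⁻¹) z := by
          rw [Matrix.nonsing_inv_mul _ (hdunit z), one_mul]
      _ = (S₀ z)⁻¹ * (S₀ z * mdz (fun w => (S₀ w)⁻¹) z) := by rw [mul_assoc]
      _ = -((S₀ z)⁻¹ * (mdz S₀ z * (S₀ z)⁻¹)) := by rw [h3, mul_neg]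
  have hmdzbT : ∀ z, mdzb (fun w => (S₀ w)⁻¹) z
      = -((S₀ z)⁻¹ * (mdzb S₀ z * (S₀ z)⁻¹)) := by
    intro z
    have h2 := mdzb_mul (F := S₀) (G := fun w => (S₀ w)⁻¹) (hS₀d z) (hTd z)
    rw [hone, mdzb_one] at h2
    have h3 : S₀ z * mdzb (fun w => (S₀ w)⁻¹) z = -(mdzb S₀ z * (S₀ z)⁻¹) :=
      eq_neg_of_add_eq_zero_right h2.symm
    calc mdzb (fun w => (S₀ w)⁻¹) z
        = ((S₀ z)⁻¹ * S₀ z) * mdzb (fun w => (S₀ w)⁻¹) z := by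
          rw [Matrix.nonsing_inv_mul _ (hdunit z), one_mul]
      _ = (S₀ z)⁻¹ * (S₀ z * mdzb (fun w => (S₀ w)⁻¹) z) := by rw [mul_assoc]
      _ = -((S₀ z)⁻¹ * (mdzb S₀ z * (S₀ z)⁻¹)) := by rw [h3, mul_neg]
  -- conjugation relations for the entries of S₀⁻¹
  have hdc : ∀ z, conj (d z) = d z := by
    intro z
    obtain ⟨hq1, hq2⟩ := hquat z
    simp only [hd, hq1, hq2, map_sub, _root_.map_mul, map_neg, Complex.conj_conj]
    ring
  have hTc00 : ∀ z, conj ((S₀ z)⁻¹ 0 0) = (S₀ z)⁻¹ 1 1 := by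
    intro z
    obtain ⟨hq1, hq2⟩ := hquat z
    rw [hTeq z]
    simp [Matrix.smul_apply, smul_eq_mul, _root_.map_mul, map_inv₀, hdc z, hq2]
  have hTc11 : ∀ z, conj ((S₀ z)⁻¹ 1 1) = (S₀ z)⁻¹ 0 0 := by
    intro z
    obtain ⟨hq1, hq2⟩ := hquat z
    rw [hTeq z]
    simp [Matrix.smul_apply, smul_eq_mul, _root_.map_mul, map_inv₀, hdc z, hq2]
  have hTc01 : ∀ z, conj ((S₀ z)⁻¹ 0 1) = -(S₀ z)⁻¹ 1 0 := by
    intro z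
    obtain ⟨hq1, hq2⟩ := hquat z
    rw [hTeq z]
    simp [Matrix.smul_apply, smul_eq_mul, _root_.map_mul, map_inv₀, hdc z, hq1]
  have hTc10 : ∀ z, conj ((S₀ z)⁻¹ 1 0) = -(S₀ z)⁻¹ 0 1 := by
    intro z
    obtain ⟨hq1, hq2⟩ := hquat z
    rw [hTeq z]
    simp [Matrix.smul_apply, smul_eq_mul, _root_.map_mul, map_inv₀, hdc z, hq1]
  -- row derivative facts
  have hP10 := fun z => (spin_rows hψ₁ hψ₂ hDirac z).1
  have hP11 := fun z => (spin_rows hψ₁ hψ₂ hDirac z).2.1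
  have hPb00 := fun z => (spin_rows hψ₁ hψ₂ hDirac z).2.2.1
  have hPb01 := fun z => (spin_rows hψ₁ hψ₂ hDirac z).2.2.2
  have hQ10 := fun z => (spin_rows hψ₀₁ hψ₀₂ hDirac₀ z).1
  have hQ11 := fun z => (spin_rows hψ₀₁ hψ₀₂ hDirac₀ z).2.1
  have hQb00 := fun z => (spin_rows hψ₀₁ hψ₀₂ hDirac₀ z).2.2.1
  have hQb01 := fun z => (spin_rows hψ₀₁ hψ₀₂ hDirac₀ z).2.2.2
  intro j z
  have hsd₀ := spin_diff hψ₀₁ hψ₀₂ z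
  have hsd := spin_diff hψ₁ hψ₂ z
  have hprod := mul_entry_diff hsd₀ (hTd z)
  have hprod2 := mul_entry_diff hprod (hS₁d z)
  constructor
  · -- the ∂z equation
    have eA : mdz (fun w => spinMat ψ₁ ψ₂ w - spinMat ψ₀₁ ψ₀₂ w * (S₀ w)⁻¹ * S₁ w) z
        = mdz (spinMat ψ₁ ψ₂) z -
          ((mdz (spinMat ψ₀₁ ψ₀₂) z * (S₀ z)⁻¹
            + spinMat ψ₀₁ ψ₀₂ z * mdz (fun w => (S₀ w)⁻¹) z) * S₁ z
           + (spinMat ψ₀₁ ψ₀₂ z * (S₀ z)⁻¹) * mdz S₁ z) := by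
      rw [mdz_sub hsd hprod2, mdz_mul hprod (hS₁d z), mdz_mul hsd₀ (hTd z)]
    have eL : dz (fun w => (spinMat ψ₁ ψ₂ w - spinMat ψ₀₁ ψ₀₂ w * (S₀ w)⁻¹ * S₁ w) 1 j) z
        = (mdz (fun w => spinMat ψ₁ ψ₂ w - spinMat ψ₀₁ ψ₀₂ w * (S₀ w)⁻¹ * S₁ w) z) 1 j := rfl
    rw [eL, eA, hmdzT z, hS₀z z, hS₁z z, gam_inv]
    rcases fin2_cases j with rfl | rfl <;>
    · simp only [Matrix.sub_apply, Matrix.add_apply, Matrix.neg_apply, Matrix.mul_apply,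
        Fin.sum_univ_two, Fin.isValue]
      simp only [hP10 z, hP11 z, hQ10 z, hQ11 z]
      simp only [gam_inv, Mform, spinMat, Gam, Matrix.smul_apply, Matrix.transpose_apply,
        smul_eq_mul, Matrix.of_apply, Matrix.cons_val', Matrix.cons_val_zero, Matrix.cons_val_one,
        Matrix.head_cons, Matrix.empty_val', Matrix.cons_val_fin_one, Matrix.head_fin_const,
        Fin.isValue]
      ring
  · have eAb : mdzb (fun w => spinMat ψ₁ ψ₂ w - spinMat ψ₀₁ ψ₀₂ w * (S₀ w)⁻¹ * S₁ w) z
        = mdzb (spinMat ψ₁ ψ₂) z -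
          ((mdzb (spinMat ψ₀₁ ψ₀₂) z * (S₀ z)⁻¹
            + spinMat ψ₀₁ ψ₀₂ z * mdzb (fun w => (S₀ w)⁻¹) z) * S₁ z
           + (spinMat ψ₀₁ ψ₀₂ z * (S₀ z)⁻¹) * mdzb S₁ z) := by
      rw [mdzb_sub hsd hprod2, mdzb_mul hprod (hS₁d z), mdzb_mul hsd₀ (hTd z)]
    have eLb : dzb (fun w => (spinMat ψ₁ ψ₂ w - spinMat ψ₀₁ ψ₀₂ w * (S₀ w)⁻¹ * S₁ w) 0 j) z
        = (mdzb (fun w => spinMat ψ₁ ψ₂ w - spinMat ψ₀₁ ψ₀₂ w * (S₀ w)⁻¹ * S₁ w) z) 0 j := rfl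
    rw [eLb, eAb, hmdzbT z, hS₀zb z, hS₁zb z, gam_inv]
    rcases fin2_cases j with rfl | rfl <;>
    · simp only [Matrix.sub_apply, Matrix.add_apply, Matrix.neg_apply, Matrix.mul_apply,
        Fin.sum_univ_two, Fin.isValue]
      simp only [hPb00 z, hPb01 z, hQb00 z, hQb01 z]
      simp only [Nform, Mform, spinMat, Gam, Matrix.smul_apply, Matrix.transpose_apply,
        smul_eq_mul, Matrix.of_apply, Matrix.cons_val', Matrix.cons_val_zero, Matrix.cons_val_one,
        Matrix.head_cons, Matrix.empty_val', Matrix.cons_val_fin_one, Matrix.head_fin_const,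
        Fin.isValue, map_add, map_sub, map_neg, _root_.map_mul, Complex.conj_conj, Complex.conj_I,
        _root_.map_one, _root_.map_zero, map_ofNat, hTc00 z, hTc01 z, hTc10 z, hTc11 z]
      ring
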